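/- Let λ > 0. A point (S, U, P) ∈ ℝ³ with U ≥ 0 satisfies F(S,U,P) = 0 if and only if one of the following holds: (S,U,P) = P₁ = (−1/(2√3), 0, 0); or U = 0 and 3S² + (3/2)P² = 1 (the family Σ); or (S,U,P) = P₃ = ((2−λ²)/(2√3(λ²+1)), √(λ²+2)/(√2(λ²+1)), λ/(λ²+1)); or λ ≤ √6 and (S,U,P) = P₂ = (0, √((6−λ²)/18), λ/3). In other words, P₁, P₂ (for λ ≤ √6), P₃ and the one-parameter family Σ are exactly the critical points of the reduced system with U ≥ 0. -/

import Mathlib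

/-- `S`-component of the reduced vector field `F`. -/
noncomputable def FS (lam S U P : ℝ) : ℝ :=
  -1 / (3 * Real.sqrt 3) - (2 / 3) * S + S ^ 2 / Real.sqrt 3
    + U ^ 2 / Real.sqrt 3 + P ^ 2 / (2 * Real.sqrt 3)
    + 2 * S ^ 3 - S * U ^ 2 + S * P ^ 2

/-- `U`-component of the reduced vector field `F`. -/
noncomputable def FU (lam S U P : ℝ) : ℝ :=
  U * (1 / 3 - (lam / 2) * P + 2 * S ^ 2 - U ^ 2 + P ^ 2)

/-- `P`-component of the reduced vector field `F`. -/
noncomputable def FP (lam S U P : ℝ) : ℝ :=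
  -(2 / 3) * P + lam * U ^ 2 + 2 * S ^ 2 * P - U ^ 2 * P + P ^ 3

/-!
With `Q = 2S² - U² + P² - 2/3` the field factors as
`FS = (S + 1/(2√3)) Q + (√3/2) U²`, `FU = U (Q + 1 - λP/2)`, `FP = P Q + λU²`.
On `U = 0` this leaves `Q = 0` (the family `Σ`) or `S = -1/(2√3), P = 0` (the point `P₁`).
For `U > 0`, `FU` and `FP` express `Q` and `λU²` through `P`, after which `FS` becomes linear
in `S`; substituting back into `Q` leaves `(3P - λ)((λ² + 1)P - λ) = 0`, whose roots give `P₂`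
and `P₃`. At `P₂` one needs `U² = (6 - λ²)/18 ≥ 0`, and for `λ = √6` the point `P₂` lies on `Σ`.
-/

namespace ReducedSystem

noncomputable def Q (S U P : ℝ) : ℝ := 2 * S ^ 2 - U ^ 2 + P ^ 2 - 2 / 3

def IsCriticalPoint (lam S U P : ℝ) : Prop :=
  FS lam S U P = 0 ∧ FU lam S U P = 0 ∧ FP lam S U P = 0

noncomputable def P₁ : ℝ × ℝ × ℝ := (-1 / (2 * √3), 0, 0)

noncomputable def P₂ (lam : ℝ) : ℝ × ℝ × ℝ := (0, √((6 - lam ^ 2) / 18), lam / 3)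

noncomputable def P₃ (lam : ℝ) : ℝ × ℝ × ℝ :=
  ((2 - lam ^ 2) / (2 * √3 * (lam ^ 2 + 1)), √(lam ^ 2 + 2) / (√2 * (lam ^ 2 + 1)),
    lam / (lam ^ 2 + 1))

def OffAxisEqs (lam S U P : ℝ) : Prop :=
  Q S U P = lam / 2 * P - 1 ∧ lam * U ^ 2 = P - lam / 2 * P ^ 2 ∧ 2 * √3 * lam * S + lam = 3 * P

variable {lam S U P : ℝ}

lemma sqrt_three_sq : √3 ^ 2 = 3 := Real.sq_sqrt (by norm_num)

lemma FS_eq (lam S U P : ℝ) :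
    FS lam S U P = (S + 1 / (2 * √3)) * Q S U P + √3 / 2 * U ^ 2 := by
  have : √3 ≠ 0 := by positivity
  unfold FS Q
  field_simp
  linear_combination -3 * U ^ 2 * sqrt_three_sq

lemma FU_eq (lam S U P : ℝ) : FU lam S U P = U * (Q S U P + 1 - lam / 2 * P) := by
  unfold FU Q; ring

lemma FP_eq (lam S U P : ℝ) : FP lam S U P = P * Q S U P + lam * U ^ 2 := by
  unfold FP Q; ring

lemma isCriticalPoint_zero_iff :
    IsCriticalPoint lam S 0 P ↔ (S, 0, P) = P₁ ∨ 3 * S ^ 2 + 3 / 2 * P ^ 2 = 1 := by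
  have hsigma : 3 * S ^ 2 + 3 / 2 * P ^ 2 = 1 ↔ Q S 0 P = 0 := by
    unfold Q; constructor <;> intro h <;> linarith
  have hS : S + 1 / (2 * √3) = 0 ↔ S = -1 / (2 * √3) := by
    rw [neg_div, add_eq_zero_iff_eq_neg]
  simp only [IsCriticalPoint, FS_eq, FU_eq, FP_eq, P₁, Prod.mk.injEq, hsigma, zero_mul,
    ne_eq, OfNat.ofNat_ne_zero, not_false_eq_true, zero_pow, mul_zero, add_zero, true_and]
  rw [mul_eq_zero, mul_eq_zero, hS]
  tauto

/-- Modulo the first two relations, `λ FS = (λP/2 - 1)(λ(S + 1/(2√3)) - (√3/2)P)`, and the first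
factor cannot vanish since it would force `λU² = 0`. -/
lemma isCriticalPoint_iff_offAxisEqs (hlam : lam ≠ 0) (hU : U ≠ 0) :
    IsCriticalPoint lam S U P ↔ OffAxisEqs lam S U P := by
  have hs : √3 ≠ 0 := by positivity
  have hC : lam * (S + 1 / (2 * √3)) - √3 / 2 * P = 0 ↔ 2 * √3 * lam * S + lam = 3 * P := by
    constructor <;> intro h
    · field_simp at h; linear_combination h + P * sqrt_three_sq
    · field_simp; linear_combination h - P * sqrt_three_sq
  simp only [IsCriticalPoint, OffAxisEqs, FS_eq, FU_eq, FP_eq, mul_eq_zero, hU, false_or, ← hC]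
  constructor
  · rintro ⟨hS, hQ, hP⟩
    have hQ' : Q S U P = lam / 2 * P - 1 := by linear_combination hQ
    have hB : lam * U ^ 2 = P - lam / 2 * P ^ 2 := by linear_combination hP - P * hQ'
    refine ⟨hQ', hB, ?_⟩
    have key : (lam / 2 * P - 1) * (lam * (S + 1 / (2 * √3)) - √3 / 2 * P) = 0 := by
      linear_combination lam * hS - (S + 1 / (2 * √3)) * lam * hQ' - √3 / 2 * hB
    refine (mul_eq_zero.mp key).resolve_left fun h ↦ hU ?_
    have : lam * U ^ 2 = 0 := by linear_combination hB - P * h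
    simpa [hlam] using this
  · rintro ⟨hQ, hB, hC⟩
    refine ⟨?_, by linear_combination hQ, by linear_combination hB + P * hQ⟩
    apply mul_left_cancel₀ hlam
    linear_combination lam * (S + 1 / (2 * √3)) * hQ + √3 / 2 * hB + (lam / 2 * P - 1) * hC

lemma OffAxisEqs.quadratic (h : OffAxisEqs lam S U P) :
    (3 * P - lam) * ((lam ^ 2 + 1) * P - lam) = 0 := by
  obtain ⟨hA, hB, hC⟩ := h
  unfold Q at hA
  linear_combination -1 / 3 * (2 * √3 * lam * S - lam + 3 * P) * hC + 2 * lam * hB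
    + 2 * lam ^ 2 * hA + 4 / 3 * lam ^ 2 * S ^ 2 * sqrt_three_sq

lemma OffAxisEqs.eq_P₂ (h : OffAxisEqs lam S U P) (hlam : lam ≠ 0) (hU : 0 ≤ U)
    (hP : P = lam / 3) : lam ≤ √6 ∧ (S, U, P) = P₂ lam := by
  obtain ⟨-, hB, hC⟩ := h
  subst hP
  have hS : S = 0 := by
    have : (2 * √3 * lam) * S = 0 := by linear_combination hC
    simpa [hlam] using this
  have hU2 : U ^ 2 = (6 - lam ^ 2) / 18 := by
    apply mul_left_cancel₀ hlam
    linear_combination hB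
  have h6 : lam ^ 2 ≤ 6 := by nlinarith [sq_nonneg U]
  refine ⟨(le_abs_self lam).trans (Real.abs_le_sqrt h6), ?_⟩
  rw [P₂, hS, ← hU2, Real.sqrt_sq hU]

lemma sq_P₃_snd (lam : ℝ) : (P₃ lam).2.1 ^ 2 = (lam ^ 2 + 2) / (2 * (lam ^ 2 + 1) ^ 2) := by
  rw [P₃, div_pow, mul_pow, Real.sq_sqrt (by positivity), Real.sq_sqrt zero_le_two]

lemma P₃_snd_pos (lam : ℝ) : 0 < (P₃ lam).2.1 := by
  unfold P₃; positivity

lemma OffAxisEqs.eq_P₃ (h : OffAxisEqs lam S U P) (hlam : lam ≠ 0) (hU : 0 ≤ U)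
    (hP : (lam ^ 2 + 1) * P = lam) : (S, U, P) = P₃ lam := by
  obtain ⟨-, hB, hC⟩ := h
  have hS : S = (2 - lam ^ 2) / (2 * √3 * (lam ^ 2 + 1)) := by
    rw [eq_div_iff (by positivity)]
    apply mul_left_cancel₀ hlam
    linear_combination (lam ^ 2 + 1) * hC + 3 * hP
  have hU2 : U ^ 2 = (P₃ lam).2.1 ^ 2 := by
    rw [sq_P₃_snd, eq_div_iff (by positivity)]
    apply mul_left_cancel₀ hlam
    linear_combination 2 * (lam ^ 2 + 1) ^ 2 * hB
      + (2 * (lam ^ 2 + 1) - lam * ((lam ^ 2 + 1) * P + lam)) * hP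
  have hP' : P = lam / (lam ^ 2 + 1) := by
    rw [eq_div_iff (by positivity)]
    linear_combination hP
  rw [(sq_eq_sq₀ hU (P₃_snd_pos lam).le).mp hU2, hS, hP']
  rfl

lemma offAxisEqs_P₂ (h6 : lam ^ 2 ≤ 6) :
    OffAxisEqs lam (P₂ lam).1 (P₂ lam).2.1 (P₂ lam).2.2 := by
  have hU2 : (P₂ lam).2.1 ^ 2 = (6 - lam ^ 2) / 18 := Real.sq_sqrt (by linarith)
  unfold OffAxisEqs Q
  simp only [P₂] at hU2 ⊢
  exact ⟨by rw [hU2]; ring, by rw [hU2]; ring, by ring⟩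

lemma offAxisEqs_P₃ (lam : ℝ) : OffAxisEqs lam (P₃ lam).1 (P₃ lam).2.1 (P₃ lam).2.2 := by
  have hs : √3 ≠ 0 := by positivity
  have hl : lam ^ 2 + 1 ≠ 0 := by positivity
  unfold OffAxisEqs Q
  rw [sq_P₃_snd]
  refine ⟨?_, ?_, ?_⟩ <;> simp only [P₃] <;> field_simp
  · linear_combination (-4 + 4 * lam ^ 2 - lam ^ 4) * sqrt_three_sq
  · ring
  · ring

lemma isCriticalPoint_iff_of_pos (hlam : lam ≠ 0) (hU : 0 < U) :
    IsCriticalPoint lam S U P ↔ (S, U, P) = P₃ lam ∨ (lam ≤ √6 ∧ (S, U, P) = P₂ lam) := by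
  rw [isCriticalPoint_iff_offAxisEqs hlam hU.ne']
  constructor
  · intro h
    rcases mul_eq_zero.mp h.quadratic with hP | hP
    · exact Or.inr (h.eq_P₂ hlam hU.le (by linarith))
    · exact Or.inl (h.eq_P₃ hlam hU.le (by linarith))
  · rintro (h | ⟨-, h⟩) <;> simp only [Prod.ext_iff] at h <;> obtain ⟨rfl, rfl, rfl⟩ := h
    · exact offAxisEqs_P₃ lam
    · have h6 : 0 < (6 - lam ^ 2) / 18 := Real.sqrt_pos.mp hU
      exact offAxisEqs_P₂ (by linarith)

lemma sigma_of_eq_P₂ (hlam : 0 < lam) (h6 : lam ≤ √6) (h : (S, 0, P) = P₂ lam) :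
    3 * S ^ 2 + 3 / 2 * P ^ 2 = 1 := by
  simp only [P₂, Prod.mk.injEq] at h
  obtain ⟨rfl, hU, rfl⟩ := h
  have hle : lam ^ 2 ≤ 6 := (Real.le_sqrt hlam.le (by norm_num)).mp h6
  have hge : 6 ≤ lam ^ 2 := by
    have := Real.sqrt_eq_zero'.mp hU.symm
    linarith
  nlinarith

end ReducedSystem

open ReducedSystem

theorem critical_points_classification
    (lam : ℝ) (hlam : 0 < lam) (S U P : ℝ) (hU : 0 ≤ U) :
    (FS lam S U P = 0 ∧ FU lam S U P = 0 ∧ FP lam S U P = 0) ↔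
      ((S, U, P) = (-1 / (2 * Real.sqrt 3), 0, 0) ∨
       (U = 0 ∧ 3 * S ^ 2 + (3 / 2) * P ^ 2 = 1) ∨
       (S, U, P) = ((2 - lam ^ 2) / (2 * Real.sqrt 3 * (lam ^ 2 + 1)),
          Real.sqrt (lam ^ 2 + 2) / (Real.sqrt 2 * (lam ^ 2 + 1)),
          lam / (lam ^ 2 + 1)) ∨
       (lam ≤ Real.sqrt 6 ∧
         (S, U, P) = (0, Real.sqrt ((6 - lam ^ 2) / 18), lam / 3))) := by
  change IsCriticalPoint lam S U P ↔ (S, U, P) = P₁ ∨ (U = 0 ∧ _) ∨ (S, U, P) = P₃ lam ∨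
    (lam ≤ √6 ∧ (S, U, P) = P₂ lam)
  rcases hU.eq_or_lt with rfl | hU
  · have hP₃ : (S, 0, P) ≠ P₃ lam := fun h ↦ (P₃_snd_pos lam).ne (congrArg (·.2.1) h)
    have hP₂ : lam ≤ √6 ∧ (S, 0, P) = P₂ lam → 3 * S ^ 2 + 3 / 2 * P ^ 2 = 1 :=
      fun h ↦ sigma_of_eq_P₂ hlam h.1 h.2
    rw [isCriticalPoint_zero_iff]
    tauto
  · have hP₁ : (S, U, P) ≠ P₁ := fun h ↦ hU.ne' (congrArg (·.2.1) h)
    rw [isCriticalPoint_iff_of_pos hlam.ne' hU]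
    simp [hP₁, hU.ne']
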